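/- arXiv:2510.25250 — 2 statements merged into one kernel-verified Lean document; each statement's English description precedes it below -/
import Mathlib

section
/- For every prime p ∈ {5, 7} and all integers n ≥ 0, a_3(pn + 4) ≡ 0 (mod 2). -/
/-- `a k n` is the number of partitions of `n` in which even parts appear in a single
color while odd parts may appear in any one of `k` colors; equivalently, it is the
coefficient of `q^n` in `∏_{i ≥ 1} (1 - q^{2i})^{k-1} / ∏_{i ≥ 1} (1 - q^i)^k` over `ℤ`.
Each factor `(1 - q^i)` has constant term `1`, hence is a unit in `ℤ⟦q⟧`, and its
inverse is given by `Ring.inverse`.  Since every factor with index `i > n` is of the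
form `1 + O(q^{n+1})` and so does not affect the coefficient of `q^n`, the infinite
products may be truncated at `i = n + 1`. -/
noncomputable def a (k n : ℕ) : ℤ :=
  PowerSeries.coeff (R := ℤ) n
    ((∏ i ∈ Finset.range (n + 1),
        ((1 : PowerSeries ℤ) - (PowerSeries.X : PowerSeries ℤ) ^ (2 * (i + 1))) ^ (k - 1)) *
      ∏ i ∈ Finset.range (n + 1),
        (Ring.inverse ((1 : PowerSeries ℤ) - (PowerSeries.X : PowerSeries ℤ) ^ (i + 1))) ^ k)

/-!
Modulo 2 we have `1 - q^{2i} ≡ (1 - q^i)^2`, so the generating function of `a 3` is congruent to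
`∏ (1 - q^i)`. By Euler's pentagonal number theorem the coefficients of this product vanish off
the generalized pentagonal numbers `k(3k - 1)/2`, and `pn + 4` is never one of them for
`p ∈ {5, 7}`: the congruence `k(3k - 1) ≡ 2 · 4` has no solution modulo 5 or modulo 7.
-/

open PowerSeries Finset

section ModTwo

variable {R : Type*} [CommRing R] [CharP R 2]

theorem PowerSeries.one_sub_X_pow_two_mul_eq_sq (j : ℕ) :
    (1 - X ^ (2 * j) : R⟦X⟧) = (1 - X ^ j) ^ 2 := by
  have h2 : (2 : R⟦X⟧) = 0 := by
    rw [← map_ofNat (C (R := R)) 2, CharTwo.two_eq_zero, map_zero]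
  linear_combination (X ^ j - X ^ (2 * j) : R⟦X⟧) * h2

theorem intCast_a_eq_coeff_prod_one_sub_X_pow {k : ℕ} (hk : 2 ≤ k) (n : ℕ) :
    (a k n : R) = coeff n (∏ i ∈ range (n + 1), (1 - X ^ (i + 1) : R⟦X⟧) ^ (k - 2)) := by
  rw [a, ← eq_intCast (Int.castRingHom R), ← coeff_map, map_mul, map_prod, map_prod,
    ← prod_mul_distrib]
  congr 1
  refine prod_congr rfl fun i _ ↦ ?_
  have hunit : IsUnit (1 - X ^ (i + 1) : ℤ⟦X⟧) := by
    rw [isUnit_iff_constantCoeff]; simp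
  have hinv :
      (1 - X ^ (i + 1)) * map (Int.castRingHom R) (Ring.inverse (1 - X ^ (i + 1))) = 1 := by
    simpa using congrArg (map (Int.castRingHom R)) (Ring.mul_inverse_cancel _ hunit)
  obtain ⟨k, rfl⟩ := Nat.exists_eq_add_of_le hk
  simp only [map_pow, map_sub, map_one, map_X, one_sub_X_pow_two_mul_eq_sq, ← pow_mul]
  rw [show 2 * (2 + k - 1) = (2 + k - 2) + (2 + k) by omega, pow_add, mul_assoc,
    ← mul_pow, hinv, one_pow, mul_one]

end ModTwo

theorem PowerSeries.coeff_prod_one_sub_X_pow_of_range_subset {R : Type*} [CommRing R] {n : ℕ}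
    {s : Finset ℕ} (hs : range (n + 1) ⊆ s) :
    coeff n (∏ i ∈ s, (1 - X ^ (i + 1) : R⟦X⟧)) =
      coeff n (∏ i ∈ range (n + 1), (1 - X ^ (i + 1) : R⟦X⟧)) := by
  have htail : X ^ (n + 1) ∣ ∏ i ∈ s \ range (n + 1), (1 - X ^ (i + 1) : R⟦X⟧) - 1 := by
    refine prod_induction _ (fun f ↦ X ^ (n + 1) ∣ f - 1) (fun f g hf hg ↦ ?_) (by simp)
      fun i hi ↦ ?_
    · simpa [mul_sub_one, sub_add_sub_cancel] using dvd_add (dvd_mul_of_dvd_right hg f) hf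
    · have : n + 1 ≤ i + 1 := by simp at hi; omega
      simpa using (pow_dvd_pow X this).neg_right
  rw [← prod_sdiff hs, ← sub_eq_zero, ← map_sub, ← sub_one_mul]
  exact X_pow_dvd_iff.mp (dvd_mul_of_dvd_left htail _) n n.lt_succ_self

theorem PowerSeries.coeff_prod_range_one_sub_X_pow (R : Type*) [CommRing R] (n : ℕ) :
    coeff n (∏ i ∈ range (n + 1), (1 - X ^ (i + 1) : R⟦X⟧)) =
      coeff n (pentagonalSeries R) := by
  obtain ⟨s, hs⟩ := Filter.eventually_atTop.mp (coeff_prod_one_sub_X_pow_eventually_eq R n)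
  rw [← coeff_prod_one_sub_X_pow_of_range_subset subset_union_right,
    hs _ subset_union_left]

theorem notMem_range_pentagonal_of_natCast_eq {m : ℕ} {r : ZMod m}
    (hr : ∀ k : ZMod m, k * (3 * k - 1) ≠ 2 * r) {N : ℕ} (hN : (N : ZMod m) = r) :
    N ∉ Set.range pentagonal := by
  rintro ⟨k, rfl⟩
  apply hr k
  simpa [hN] using congrArg (Int.cast : ℤ → ZMod m) (two_mul_natCast_pentagonal k).symm

theorem a_three_cong_mod_two_shift_four (p : ℕ)
    (hp : p ∈ ({5, 7} : Finset ℕ)) (n : ℕ) :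
    (2 : ℤ) ∣ a 3 (p * n + 4) := by
  have hN : p * n + 4 ∉ Set.range pentagonal := by
    rcases (by simpa using hp : p = 5 ∨ p = 7) with rfl | rfl
    · exact notMem_range_pentagonal_of_natCast_eq (m := 5) (r := 4) (by decide)
        (by simp [show (5 : ZMod 5) = 0 from rfl])
    · exact notMem_range_pentagonal_of_natCast_eq (m := 7) (r := 4) (by decide)
        (by simp [show (7 : ZMod 7) = 0 from rfl])
  apply (ZMod.intCast_zmod_eq_zero_iff_dvd _ 2).mp
  rw [intCast_a_eq_coeff_prod_one_sub_X_pow (by norm_num)]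
  simp only [Nat.reduceSub, pow_one]
  rw [coeff_prod_range_one_sub_X_pow, coeff_pentagonalSeries_eq_zero _ hN]
end

section
/- For all integers n ≥ 0, a_5(6n + 5) ≡ 0 (mod 2). -/
/-!
Modulo 2 we have `(1 - q^{2i})^4 / (1 - q^i)^5 = (1 - q^i)^3`, so `a 5 n` is the coefficient of
`q^n` in `(q;q)_∞^3`, and, still in characteristic 2,
`(q;q)_∞^3 = (q;q)_∞ (q²;q²)_∞ = (q;q²)_∞ (q²;q²)_∞² = (-q;q²)_∞ (q⁴;q⁴)_∞`.
By Gauss' identity the last product is `∑_{k ∈ ℤ} q^{k(2k+1)}`, and `k(2k+1)` is never `2` mod `3`.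
Gauss' identity is the limit of the finite Jacobi triple product
`∏_{i<N} (1 + q^{4i+1})(1 + q^{4i+3}) = ∑_{|k| ≤ N} [2N, N+k]_{q⁴} q^{k(2k+1)}`, a rescaled
q-binomial theorem, since `[2N, N+k]_{q⁴} (q⁴;q⁴)_∞ ≡ 1` to high order when `N ± k` are large.
-/

open Finset

lemma Finset.prod_range_two_mul {M : Type*} [CommMonoid M] (f : ℕ → M) :
    ∀ n : ℕ, ∏ i ∈ range (2 * n), f i = ∏ i ∈ range n, (f (2 * i) * f (2 * i + 1))
  | 0 => rfl
  | n + 1 => by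
    rw [Nat.mul_succ, prod_range_succ, prod_range_succ, prod_range_succ,
      Finset.prod_range_two_mul f n, mul_assoc]

section QAnalogues

variable {A : Type*} [CommRing A]

def qPochhammer (q : A) (n : ℕ) : A := ∏ i ∈ range n, (1 - q ^ (i + 1))

def qBinomial (q : A) : ℕ → ℕ → A
  | _, 0 => 1
  | 0, _ + 1 => 0
  | n + 1, m + 1 => q ^ (m + 1) * qBinomial q n (m + 1) + qBinomial q n m

variable (q : A)

@[simp] lemma qPochhammer_zero : qPochhammer q 0 = 1 := by simp [qPochhammer]

lemma qPochhammer_succ (n : ℕ) : qPochhammer q (n + 1) = qPochhammer q n * (1 - q ^ (n + 1)) :=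
  prod_range_succ _ _

lemma qPochhammer_two_mul (s : ℕ) :
    qPochhammer q (2 * s) = (∏ i ∈ range s, (1 - q ^ (2 * i + 1))) * qPochhammer (q ^ 2) s := by
  simp only [qPochhammer, prod_range_two_mul, prod_mul_distrib, ← pow_mul]
  congr 2 with i

@[simp] lemma qBinomial_zero_right (n : ℕ) : qBinomial q n 0 = 1 := by cases n <;> rfl

lemma qBinomial_succ_succ (n m : ℕ) :
    qBinomial q (n + 1) (m + 1) = q ^ (m + 1) * qBinomial q n (m + 1) + qBinomial q n m := rfl

lemma qBinomial_eq_zero_of_lt : ∀ {n m : ℕ}, n < m → qBinomial q n m = 0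
  | 0, _ + 1, _ => rfl
  | n + 1, m + 1, h => by
    rw [qBinomial_succ_succ, qBinomial_eq_zero_of_lt (by omega),
      qBinomial_eq_zero_of_lt (by omega), mul_zero, add_zero]

@[simp] lemma qBinomial_self : ∀ n : ℕ, qBinomial q n n = 1
  | 0 => rfl
  | n + 1 => by
    rw [qBinomial_succ_succ, qBinomial_eq_zero_of_lt q n.lt_succ_self, qBinomial_self n]
    ring

lemma qBinomial_mul_qPochhammer_mul_qPochhammer :
    ∀ m d : ℕ, qBinomial q (m + d) m * qPochhammer q m * qPochhammer q d = qPochhammer q (m + d)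
  | 0, d => by simp
  | m + 1, 0 => by simp
  | m + 1, d + 1 => by
    have h₁ := qBinomial_mul_qPochhammer_mul_qPochhammer (m + 1) d
    have h₂ := qBinomial_mul_qPochhammer_mul_qPochhammer m (d + 1)
    rw [show m + 1 + d = m + d + 1 by omega, qPochhammer_succ q m] at h₁
    rw [show m + (d + 1) = m + d + 1 by omega, qPochhammer_succ q d] at h₂
    rw [show m + 1 + (d + 1) = m + d + 1 + 1 by omega, qBinomial_succ_succ,
      qPochhammer_succ q (m + d + 1), qPochhammer_succ q m, qPochhammer_succ q d]
    linear_combination (q ^ (m + 1) * (1 - q ^ (d + 1))) * h₁ + (1 - q ^ (m + 1)) * h₂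

lemma prod_add_pow_mul_eq_sum_qBinomial (y : A) :
    ∀ (n : ℕ) (w : A), ∏ j ∈ range n, (y + q ^ j * w) =
      ∑ p ∈ antidiagonal n, q ^ p.1.choose 2 * qBinomial q n p.1 * w ^ p.1 * y ^ p.2
  | 0, w => by simp
  | n + 1, w => by
    set T : ℕ × ℕ → A :=
      fun p ↦ q ^ p.1.choose 2 * qBinomial q n p.1 * (q * w) ^ p.1 * y ^ p.2
    have ih : ∏ j ∈ range n, (y + q ^ (j + 1) * w) = ∑ p ∈ antidiagonal n, T p := by
      simp only [pow_succ, mul_assoc, prod_add_pow_mul_eq_sum_qBinomial y n (q * w), T]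
    have hchoose (b : ℕ) : (b + 1).choose 2 = b.choose 2 + b := by
      simp [Nat.choose_succ_succ, add_comm]
    -- both ends of the antidiagonal of `n + 1` give `y * ∑ T`
    have hy : y * ∑ p ∈ antidiagonal n, T p =
        y ^ (n + 1) + ∑ p ∈ antidiagonal n, T (p.1 + 1, p.2) := by
      have h := (Nat.sum_antidiagonal_succ (n := n) (f := T)).symm.trans
        Nat.sum_antidiagonal_succ'
      simp only [T, qBinomial_eq_zero_of_lt q n.lt_succ_self, qBinomial_zero_right] at h
      rw [mul_sum]
      simpa [T, pow_succ, mul_comm y, mul_assoc] using h.symm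
    rw [prod_range_succ', ih, Nat.sum_antidiagonal_succ, mul_add, mul_comm, hy, sum_mul,
      add_assoc, ← sum_add_distrib]
    simp only [T, qBinomial_succ_succ, hchoose, Nat.choose_zero_succ, qBinomial_zero_right]
    congr 1
    · simp
    · refine sum_congr rfl fun p _ ↦ ?_
      ring

lemma qPochhammer_add_smodEq (t r : ℕ) :
    qPochhammer q (t + r) ≡ qPochhammer q t [SMOD Ideal.span {q ^ (t + 1)}] := by
  have hfactor : ∏ i ∈ range r, (1 - q ^ (t + i + 1)) ≡ ∏ _i ∈ range r, (1 : A)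
      [SMOD Ideal.span {q ^ (t + 1)}] := by
    refine SModEq.prod fun i _ ↦ SModEq.sub_mem.mpr ?_
    rw [sub_sub_cancel_left, Ideal.mem_span_singleton, dvd_neg]
    exact pow_dvd_pow q (by omega)
  rw [prod_const_one] at hfactor
  simpa [qPochhammer, prod_range_add, add_assoc] using (SModEq.refl (qPochhammer q t)).mul hfactor

lemma qPochhammer_smodEq {t m n : ℕ} (hm : t ≤ m) (hn : t ≤ n) :
    qPochhammer q m ≡ qPochhammer q n [SMOD Ideal.span {q ^ (t + 1)}] := by
  obtain ⟨r, rfl⟩ := Nat.exists_eq_add_of_le hm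
  obtain ⟨s, rfl⟩ := Nat.exists_eq_add_of_le hn
  exact (qPochhammer_add_smodEq q t r).trans (qPochhammer_add_smodEq q t s).symm

lemma qBinomial_mul_qPochhammer_smodEq_one {t b c L : ℕ} (hb : t ≤ b) (hc : t ≤ c)
    (hL : t ≤ L) (hb' : IsUnit (qPochhammer q b)) (hc' : IsUnit (qPochhammer q c)) :
    qBinomial q (b + c) b * qPochhammer q L ≡ 1 [SMOD Ideal.span {q ^ (t + 1)}] := by
  obtain ⟨u, hu⟩ := hb'.mul hc'
  have hmul : qBinomial q (b + c) b * qPochhammer q L * u ≡ 1 * u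
      [SMOD Ideal.span {q ^ (t + 1)}] := by
    rw [hu, one_mul, ← mul_assoc, mul_right_comm _ (qPochhammer q L),
      mul_right_comm _ (qPochhammer q L), qBinomial_mul_qPochhammer_mul_qPochhammer]
    exact ((qPochhammer_smodEq q (by omega) le_rfl).mul (qPochhammer_smodEq q hL le_rfl)).trans
      ((qPochhammer_smodEq q hb le_rfl).mul (qPochhammer_smodEq q hc le_rfl)).symm
  simpa using hmul.mul (SModEq.refl (u⁻¹ : Aˣ).val)

end QAnalogues

section CharTwo

variable {A : Type*} [CommRing A] [CharP A 2] (q : A)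

lemma qPochhammer_sq (t : ℕ) : qPochhammer q t ^ 2 = qPochhammer (q ^ 2) t := by
  rw [qPochhammer, ← prod_pow]
  refine prod_congr rfl fun i _ ↦ ?_
  rw [sub_pow_char, one_pow, ← pow_mul, ← pow_mul, mul_comm]

lemma qPochhammer_two_mul_pow_three_smodEq (s : ℕ) :
    qPochhammer q (2 * s) ^ 3 ≡ (∏ i ∈ range s, (1 + q ^ (2 * i + 1))) * qPochhammer (q ^ 4) s
      [SMOD Ideal.span {q ^ (2 * (s + 1))}] := by
  have hsq : qPochhammer (q ^ 2) (2 * s) ≡ qPochhammer (q ^ 2) s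
      [SMOD Ideal.span {q ^ (2 * (s + 1))}] := by
    rw [pow_mul]
    exact qPochhammer_smodEq _ (by omega) le_rfl
  have hodd : ∏ i ∈ range s, (1 - q ^ (2 * i + 1)) = ∏ i ∈ range s, (1 + q ^ (2 * i + 1)) :=
    by simp only [CharTwo.sub_eq_add]
  calc qPochhammer q (2 * s) ^ 3
      = qPochhammer q (2 * s) * qPochhammer (q ^ 2) (2 * s) := by rw [← qPochhammer_sq]; ring
    _ ≡ qPochhammer q (2 * s) * qPochhammer (q ^ 2) s
        [SMOD Ideal.span {q ^ (2 * (s + 1))}] := SModEq.rfl.mul hsq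
    _ = (∏ i ∈ range s, (1 + q ^ (2 * i + 1))) * qPochhammer (q ^ 4) s := by
        rw [qPochhammer_two_mul, hodd, show q ^ 4 = (q ^ 2) ^ 2 by ring,
          ← qPochhammer_sq (q ^ 2) s]
        ring

end CharTwo

namespace PowerSeries

variable {R : Type*} [CommRing R]

lemma isUnit_qPochhammer {q : R⟦X⟧} (hq : constantCoeff q = 0) (n : ℕ) :
    IsUnit (qPochhammer q n) := by
  simp [isUnit_iff_constantCoeff, qPochhammer, hq]

lemma coeff_eq_of_smodEq {f g : R⟦X⟧} {m n : ℕ} (h : f ≡ g [SMOD Ideal.span {X ^ n}])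
    (hm : m < n) : coeff m f = coeff m g := by
  rw [SModEq.sub_mem, Ideal.mem_span_singleton, X_pow_dvd_iff] at h
  simpa [sub_eq_zero] using h m hm

-- the left side is the product of the q-binomial theorem at `q = w = X⁴`, `y = X^(4N+1)`
lemma prod_X_pow_add_X_pow_eq_X_pow_mul_prod (N : ℕ) :
    ∏ j ∈ range (2 * N), ((X : R⟦X⟧) ^ (4 * N + 1) + (X ^ 4) ^ j * X ^ 4) =
      X ^ (2 * N * (N + 1) + N * (4 * N + 1)) *
        ∏ i ∈ range N, ((1 + X ^ (4 * i + 1)) * (1 + X ^ (4 * i + 3))) := by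
  have hsum : ∑ j ∈ range N, (4 * j + 4) = 2 * N * (N + 1) := by
    induction N with
    | zero => rfl
    | succ N ih => rw [sum_range_succ, ih]; ring
  have hlow : ∏ j ∈ range N, ((X : R⟦X⟧) ^ (4 * N + 1) + (X ^ 4) ^ j * X ^ 4) =
      ∏ j ∈ range N, (X ^ (4 * j + 4) * (1 + X ^ (4 * (N - 1 - j) + 1))) :=
    prod_congr rfl fun j hj ↦ by
      rw [mem_range] at hj
      rw [mul_add, mul_one, ← pow_mul, ← pow_add, ← pow_add, add_comm]
      congr 2; omega
  have hhigh : ∏ i ∈ range N, ((X : R⟦X⟧) ^ (4 * N + 1) + (X ^ 4) ^ (N + i) * X ^ 4) =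
      ∏ i ∈ range N, (X ^ (4 * N + 1) * (1 + X ^ (4 * i + 3))) :=
    prod_congr rfl fun i _ ↦ by
      rw [mul_add, mul_one, ← pow_mul, ← pow_add, ← pow_add]
      congr 2; ring
  rw [two_mul, prod_range_add, hlow, hhigh, prod_mul_distrib, prod_mul_distrib,
    prod_range_reflect (fun i ↦ 1 + (X : R⟦X⟧) ^ (4 * i + 1)), prod_pow_eq_pow_sum, hsum,
    prod_const, card_range, ← pow_mul, pow_add, prod_mul_distrib]
  ring

lemma X_pow_mul_prod_one_add_X_pow_odd_eq_sum (N : ℕ) :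
    X ^ (2 * N * (N + 1) + N * (4 * N + 1)) *
        ∏ i ∈ range N, ((1 + (X : R⟦X⟧) ^ (4 * i + 1)) * (1 + X ^ (4 * i + 3))) =
      ∑ p ∈ antidiagonal (2 * N),
        X ^ (2 * p.1 * (p.1 + 1) + (4 * N + 1) * p.2) * qBinomial (X ^ 4) (2 * N) p.1 := by
  rw [← prod_X_pow_add_X_pow_eq_X_pow_mul_prod, prod_add_pow_mul_eq_sum_qBinomial]
  have hexp (b : ℕ) : 4 * b.choose 2 + 4 * b = 2 * b * (b + 1) := by
    induction b with
    | zero => rfl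
    | succ b ih =>
      rw [show (b + 1).choose 2 = b.choose 2 + b by simp [Nat.choose_succ_succ, add_comm]]
      linarith
  refine sum_congr rfl fun ⟨b, c⟩ _ ↦ ?_
  simp only [← pow_mul, ← hexp, pow_add]
  ring

lemma coeff_prod_one_add_X_pow_odd_mul_qPochhammer_eq_zero {M N L : ℕ} (hN : 2 * M ≤ N)
    (hL : M ≤ L) (hM : ∀ k : ℤ, k * (2 * k + 1) ≠ M) :
    coeff M ((∏ i ∈ range N, ((1 + (X : R⟦X⟧) ^ (4 * i + 1)) * (1 + X ^ (4 * i + 3)))) *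
      qPochhammer (X ^ 4) L) = 0 := by
  set c := 2 * N * (N + 1) + N * (4 * N + 1)
  rw [← coeff_X_pow_mul _ c, ← mul_assoc, X_pow_mul_prod_one_add_X_pow_odd_eq_sum, sum_mul,
    map_sum]
  refine sum_eq_zero fun ⟨b, d⟩ hbd ↦ ?_
  rw [HasAntidiagonal.mem_antidiagonal] at hbd
  dsimp only
  rw [mul_assoc, coeff_X_pow_mul']
  split_ifs with hle
  · have hE : ((2 * b * (b + 1) + (4 * N + 1) * d : ℕ) : ℤ) =
        c + ((b : ℤ) - N) * (2 * ((b : ℤ) - N) + 1) := by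
      have hd : (d : ℤ) = 2 * N - b := by omega
      push_cast [c, hd]; ring
    generalize 2 * b * (b + 1) + (4 * N + 1) * d = E at hE hle ⊢
    clear_value c
    set k : ℤ := (b : ℤ) - N
    have hk₀ : 0 ≤ k * (2 * k + 1) := by rcases le_or_gt 0 k with h | h <;> nlinarith
    have hkM : k * (2 * k + 1) < M := lt_of_le_of_ne (by omega) (hM k)
    have hbM : M ≤ b ∧ M ≤ d := by
      dsimp only at hbd
      constructor <;> rcases le_or_gt 0 k with h | h <;> nlinarith
    have hnear := qBinomial_mul_qPochhammer_smodEq_one (X ^ 4 : R⟦X⟧) hbM.1 hbM.2 hL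
      (isUnit_qPochhammer (by simp) b) (isUnit_qPochhammer (by simp) d)
    rw [← pow_mul, hbd] at hnear
    rw [coeff_eq_of_smodEq hnear (by omega), coeff_one, if_neg (by omega)]
  · rfl

instance {S : Type*} [Semiring S] (p : ℕ) [CharP S p] : CharP S⟦X⟧ p :=
  charP_of_injective_ringHom C_injective p

variable [CharP R 2]

lemma coeff_qPochhammer_X_pow_three {M N : ℕ} (hMN : M ≤ 2 * N) :
    coeff M (qPochhammer (X : R⟦X⟧) (M + 1) ^ 3) =
      coeff M ((∏ i ∈ range N, ((1 + (X : R⟦X⟧) ^ (4 * i + 1)) * (1 + X ^ (4 * i + 3)))) *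
        qPochhammer (X ^ 4) (2 * N)) := by
  have htrunc : qPochhammer (X : R⟦X⟧) (M + 1) ≡ qPochhammer X (2 * (2 * N))
      [SMOD Ideal.span {X ^ (M + 1)}] := qPochhammer_smodEq X le_self_add (by omega)
  have hcube := qPochhammer_two_mul_pow_three_smodEq (X : R⟦X⟧) (2 * N)
  have hodd : ∏ i ∈ range (2 * N), (1 + (X : R⟦X⟧) ^ (2 * i + 1)) =
      ∏ i ∈ range N, ((1 + (X : R⟦X⟧) ^ (4 * i + 1)) * (1 + X ^ (4 * i + 3))) := by
    rw [prod_range_two_mul]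
    refine prod_congr rfl fun i _ ↦ ?_
    ring_nf
  rw [hodd] at hcube
  refine coeff_eq_of_smodEq ((htrunc.pow 3).trans (hcube.mono ?_)) M.lt_succ_self
  rw [Ideal.span_singleton_le_span_singleton]
  exact pow_dvd_pow X (by omega)

end PowerSeries

open PowerSeries

lemma intCast_a_eq_coeff_qPochhammer {k : ℕ} (hk : 2 ≤ k) (n : ℕ) :
    ((a k n : ℤ) : ZMod 2) = coeff n (qPochhammer (X : (ZMod 2)⟦X⟧) (n + 1) ^ (k - 2)) := by
  obtain ⟨m, rfl⟩ := Nat.exists_eq_add_of_le' hk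
  set f := map (Int.castRingHom (ZMod 2))
  have hfactor (j : ℕ) : f ((1 - X ^ (2 * (j + 1))) ^ (m + 2 - 1)) *
      f (Ring.inverse (1 - X ^ (j + 1)) ^ (m + 2)) = (1 - X ^ (j + 1)) ^ m := by
    have hunit : IsUnit (1 - X ^ (j + 1) : ℤ⟦X⟧) := by simp [isUnit_iff_constantCoeff]
    have hinv : (1 - X ^ (j + 1)) * f (Ring.inverse (1 - X ^ (j + 1))) = 1 := by
      simpa [f] using congrArg f (Ring.mul_inverse_cancel _ hunit)
    rw [map_pow, map_pow, map_sub, map_one, map_pow, map_X, pow_mul', ← one_pow 2,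
      ← sub_pow_char, one_pow, show m + 2 - 1 = m + 1 from rfl]
    generalize f (Ring.inverse (1 - X ^ (j + 1))) = v at hinv ⊢
    generalize (1 - X ^ (j + 1) : (ZMod 2)⟦X⟧) = y at hinv ⊢
    calc (y ^ 2) ^ (m + 1) * v ^ (m + 2) = y ^ m * (y * v) ^ (m + 2) := by ring
      _ = y ^ m := by rw [hinv, one_pow, mul_one]
  rw [a, ← eq_intCast (Int.castRingHom (ZMod 2)), ← coeff_map, map_mul, map_prod, map_prod,
    ← prod_mul_distrib, prod_congr rfl fun j _ ↦ hfactor j, qPochhammer, ← prod_pow,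
    Nat.add_sub_cancel]

lemma Int.mul_two_mul_add_one_emod_three_ne_two (k : ℤ) : k * (2 * k + 1) % 3 ≠ 2 := by
  rcases (by omega : k % 3 = 0 ∨ k % 3 = 1 ∨ k % 3 = 2) with h | h | h <;>
    simp [Int.mul_emod, Int.add_emod, h]

theorem a_five_six_n_plus_five (n : ℕ) :
    (2 : ℤ) ∣ a 5 (6 * n + 5) := by
  rw [← Nat.cast_ofNat, ← ZMod.intCast_zmod_eq_zero_iff_dvd,
    intCast_a_eq_coeff_qPochhammer (by norm_num),
    coeff_qPochhammer_X_pow_three (N := 2 * (6 * n + 5)) (by omega)]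
  exact coeff_prod_one_add_X_pow_odd_mul_qPochhammer_eq_zero le_rfl (by omega) fun k hk ↦
    Int.mul_two_mul_add_one_emod_three_ne_two k (by omega)
end
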